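/- For the adaptive stepsize L = (Σ_{i∈J} ω̄_i(a_iᵀx − b_i)²)/‖Σ_{i∈J} ω̄_i(a_iᵀx − b_i)a_i‖² with ω̄_i = ω_i/‖a_i‖², whenever the denominator is nonzero one has L ≥ 1/λ_max(A_Jᵀ diag(ω̄_i, i∈J) A_J). -/

import Mathlib

/-!
Write `c i = w i / ‖a i‖²`, `r i` for the residuals, `M = ∑ c i • a i a iᵀ` and
`z = ∑ c i r i • a i`. Weighted Cauchy–Schwarz gives `(z ⬝ z)² = (∑ c i r i (a i ⬝ z))² ≤
(∑ c i r i²) (∑ c i (a i ⬝ z)²) = (∑ c i r i²) (zᵀ M z)`, and the Rayleigh bound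
`zᵀ M z ≤ λ_max(M) (z ⬝ z)` turns this into `z ⬝ z ≤ (∑ c i r i²) λ_max(M)`.
-/

open Matrix Finset

/-- The largest eigenvalue of a real square matrix. -/
noncomputable def lamMax {n : ℕ} (M : Matrix (Fin n) (Fin n) ℝ) : ℝ :=
  sSup {μ : ℝ | ∃ v : Fin n → ℝ, v ≠ 0 ∧ M.mulVec v = μ • v}

section Spectrum

variable {n : Type*} [Fintype n] [DecidableEq n]

theorem Matrix.mem_spectrum_iff_exists_mulVec_eq_smul {K : Type*} [Field K] {M : Matrix n n K}
    {μ : K} : μ ∈ spectrum K M ↔ ∃ v : n → K, v ≠ 0 ∧ M *ᵥ v = μ • v := by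
  rw [← spectrum_toLin', ← Module.End.hasEigenvalue_iff_mem_spectrum]
  constructor
  · intro h
    obtain ⟨v, hv⟩ := h.exists_hasEigenvector
    exact ⟨v, hv.2, by simpa using hv.apply_eq_smul⟩
  · rintro ⟨v, hv, hMv⟩
    exact Module.End.hasEigenvalue_of_hasEigenvector
      ⟨Module.End.mem_eigenspace_iff.mpr (by simpa using hMv), hv⟩

open scoped MatrixOrder in
theorem Matrix.IsHermitian.dotProduct_mulVec_le_of_spectrum_le {M : Matrix n n ℝ}
    (hM : M.IsHermitian) {r : ℝ} (h : ∀ x ∈ spectrum ℝ M, x ≤ r) (v : n → ℝ) :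
    v ⬝ᵥ M *ᵥ v ≤ r * (v ⬝ᵥ v) := by
  have hle : M ≤ algebraMap ℝ _ r := le_algebraMap_of_spectrum_le h hM.isSelfAdjoint
  have hpsd := (Matrix.le_iff.mp hle).dotProduct_mulVec_nonneg v
  rw [sub_mulVec, dotProduct_sub, algebraMap_eq_diagonal] at hpsd
  simp only [star_trivial, sub_nonneg] at hpsd
  simpa [Pi.algebraMap_def, mulVec_diagonal, dotProduct_smul] using hpsd

end Spectrum

theorem lamMax_eq_sSup_spectrum {n : ℕ} (M : Matrix (Fin n) (Fin n) ℝ) :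
    lamMax M = sSup (spectrum ℝ M) := by
  rw [lamMax]
  congr 1
  ext μ
  exact mem_spectrum_iff_exists_mulVec_eq_smul.symm

theorem le_lamMax_of_mem_spectrum {n : ℕ} {M : Matrix (Fin n) (Fin n) ℝ} {μ : ℝ}
    (hμ : μ ∈ spectrum ℝ M) : μ ≤ lamMax M :=
  lamMax_eq_sSup_spectrum M ▸ le_csSup M.finite_real_spectrum.bddAbove hμ

theorem Matrix.IsHermitian.dotProduct_mulVec_le_lamMax_mul {n : ℕ}
    {M : Matrix (Fin n) (Fin n) ℝ} (hM : M.IsHermitian) (v : Fin n → ℝ) :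
    v ⬝ᵥ M *ᵥ v ≤ lamMax M * (v ⬝ᵥ v) :=
  hM.dotProduct_mulVec_le_of_spectrum_le (fun _ ↦ le_lamMax_of_mem_spectrum) v

section WeightedSum

variable {ι n : Type*} [Fintype n] (s : Finset ι) {c : ι → ℝ} (a : ι → n → ℝ)

theorem posSemidef_sum_smul_vecMulVec (hc : ∀ i ∈ s, 0 ≤ c i) :
    (∑ i ∈ s, c i • vecMulVec (a i) (a i)).PosSemidef :=
  posSemidef_sum s fun i hi ↦ by
    simpa using (posSemidef_vecMulVec_self_star (a i)).smul (hc i hi)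

theorem dotProduct_sum_smul_vecMulVec_mulVec (c : ι → ℝ) (v : n → ℝ) :
    v ⬝ᵥ (∑ i ∈ s, c i • vecMulVec (a i) (a i)) *ᵥ v = ∑ i ∈ s, c i * (a i ⬝ᵥ v) ^ 2 := by
  rw [sum_mulVec, dotProduct_sum]
  refine sum_congr rfl fun i _ ↦ ?_
  rw [smul_mulVec, vecMulVec_mulVec]
  simp only [MulOpposite.smul_eq_mul_unop, MulOpposite.unop_op, dotProduct_smul, smul_eq_mul,
    dotProduct_comm v (a i)]
  ring

theorem sq_sum_smul_dotProduct_le (hc : ∀ i ∈ s, 0 ≤ c i) (r : ι → ℝ) (v : n → ℝ) :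
    ((∑ i ∈ s, (c i * r i) • a i) ⬝ᵥ v) ^ 2 ≤
      (∑ i ∈ s, c i * r i ^ 2) * (v ⬝ᵥ (∑ i ∈ s, c i • vecMulVec (a i) (a i)) *ᵥ v) := by
  rw [sum_dotProduct, dotProduct_sum_smul_vecMulVec_mulVec]
  simp only [smul_dotProduct, smul_eq_mul]
  exact sum_sq_le_sum_mul_sum_of_sq_le_mul s
    (fun i hi ↦ mul_nonneg (hc i hi) (sq_nonneg _)) (fun i hi ↦ mul_nonneg (hc i hi) (sq_nonneg _))
    fun i _ ↦ le_of_eq (by ring)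

end WeightedSum

theorem inv_lamMax_le_div {ι : Type*} {n : ℕ} (s : Finset ι) {c : ι → ℝ}
    (hc : ∀ i ∈ s, 0 ≤ c i) (a : ι → Fin n → ℝ) (r : ι → ℝ)
    (hz : ∑ i ∈ s, (c i * r i) • a i ≠ 0) :
    (lamMax (∑ i ∈ s, c i • vecMulVec (a i) (a i)))⁻¹ ≤
      (∑ i ∈ s, c i * r i ^ 2) /
        ((∑ i ∈ s, (c i * r i) • a i) ⬝ᵥ (∑ i ∈ s, (c i * r i) • a i)) := by
  set M := ∑ i ∈ s, c i • vecMulVec (a i) (a i)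
  set z := ∑ i ∈ s, (c i * r i) • a i
  set q := ∑ i ∈ s, c i * r i ^ 2
  have hzz : 0 < z ⬝ᵥ z := by simpa using dotProduct_star_self_pos_iff.mpr hz
  have hq : 0 ≤ q := sum_nonneg fun i hi ↦ mul_nonneg (hc i hi) (sq_nonneg _)
  have hM : M.IsHermitian := (posSemidef_sum_smul_vecMulVec s a hc).isHermitian
  have hbound : z ⬝ᵥ z ≤ q * lamMax M := by
    refine le_of_mul_le_mul_right ?_ hzz
    calc (z ⬝ᵥ z) * (z ⬝ᵥ z) = (z ⬝ᵥ z) ^ 2 := (sq _).symm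
      _ ≤ q * (z ⬝ᵥ M *ᵥ z) := sq_sum_smul_dotProduct_le s a hc r z
      _ ≤ q * (lamMax M * (z ⬝ᵥ z)) :=
        mul_le_mul_of_nonneg_left (hM.dotProduct_mulVec_le_lamMax_mul z) hq
      _ = q * lamMax M * (z ⬝ᵥ z) := (mul_assoc _ _ _).symm
  have hlam : 0 < lamMax M := pos_of_mul_pos_right (hzz.trans_le hbound) hq
  rw [inv_eq_one_div, div_le_div_iff₀ hlam hzz, one_mul]
  exact hbound

theorem stmt10_general (m n : ℕ) (A : Matrix (Fin m) (Fin n) ℝ)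
    (J : Finset (Fin m)) (w : Fin m → ℝ) (hw : ∀ i ∈ J, 0 < w i)
    (x : Fin n → ℝ) (b : Fin m → ℝ)
    (hden : (∑ i ∈ J, ((w i / (A i ⬝ᵥ A i)) * (A i ⬝ᵥ x - b i)) • A i) ≠ 0) :
    (lamMax (∑ i ∈ J, (w i / (A i ⬝ᵥ A i)) • vecMulVec (A i) (A i)))⁻¹ ≤
      (∑ i ∈ J, (w i / (A i ⬝ᵥ A i)) * (A i ⬝ᵥ x - b i) ^ 2) /
        ((∑ i ∈ J, ((w i / (A i ⬝ᵥ A i)) * (A i ⬝ᵥ x - b i)) • A i) ⬝ᵥ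
          (∑ i ∈ J, ((w i / (A i ⬝ᵥ A i)) * (A i ⬝ᵥ x - b i)) • A i)) :=
  inv_lamMax_le_div J
    (fun i hi ↦ div_nonneg (hw i hi).le (by simpa using dotProduct_star_self_nonneg (A i)))
    A (fun i ↦ A i ⬝ᵥ x - b i) hden

theorem stmt10 (m n : ℕ) (A : Matrix (Fin m) (Fin n) ℝ) (hrows : ∀ i, A i ≠ 0)
    (J : Finset (Fin m)) (w : Fin m → ℝ) (hw : ∀ i ∈ J, 0 < w i)
    (x : Fin n → ℝ) (b : Fin m → ℝ)
    (hres : ∃ i ∈ J, A i ⬝ᵥ x - b i ≠ 0)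
    (hden : (∑ i ∈ J, ((w i / (A i ⬝ᵥ A i)) * (A i ⬝ᵥ x - b i)) • A i) ≠ 0) :
    (lamMax (∑ i ∈ J, (w i / (A i ⬝ᵥ A i)) • vecMulVec (A i) (A i)))⁻¹ ≤
      (∑ i ∈ J, (w i / (A i ⬝ᵥ A i)) * (A i ⬝ᵥ x - b i) ^ 2) /
        ((∑ i ∈ J, ((w i / (A i ⬝ᵥ A i)) * (A i ⬝ᵥ x - b i)) • A i) ⬝ᵥ
          (∑ i ∈ J, ((w i / (A i ⬝ᵥ A i)) * (A i ⬝ᵥ x - b i)) • A i)) :=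
  stmt10_general m n A J w hw x b hden
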